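/- arXiv:2402.13672 — 6 statements merged into one kernel-verified Lean document; each statement's English description precedes it below -/
import Mathlib

section
/- If p^k = r^l + 1 where p and r are prime numbers and k, l > 1, then p^k = 9 and r^l = 8. -/
/-!
By parity one of `p`, `r` is `2`. For an odd exponent `n > 1` the equation says that `|x ^ n - 1|`
is a power of two, with `x = p` or `x = -r` (as `r ^ l + 1 = -((-r) ^ l - 1)`); but then the odd
cofactor `1 + x + ⋯ + x ^ (n - 1)` of `x - 1` must be `±1`, which is too small. For an even
exponent, `2 ^ k ≡ 0 [MOD 4]` is not a square plus one, and `(p ^ m - 1) (p ^ m + 1) = 2 ^ l`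
writes two powers of two differing by `2`, which forces `p ^ m = 3`.
-/

theorem Int.odd_geom_sum {x : ℤ} {n : ℕ} (hx : Odd x) (hn : Odd n) :
    Odd (∑ i ∈ Finset.range n, x ^ i) := by
  rw [← ZMod.intCast_eq_one_iff_odd] at hx ⊢
  rw [← ZMod.natCast_eq_one_iff_odd] at hn
  push_cast
  simp [hx, hn]

theorem Int.natAbs_eq_one_of_odd_of_dvd_two_pow {t : ℤ} {a : ℕ} (ht : Odd t) (h : t ∣ 2 ^ a) :
    t.natAbs = 1 := by
  have hdvd : t.natAbs ∣ 2 ^ a := by simpa [Int.natAbs_pow] using Int.natAbs_dvd_natAbs.mpr h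
  exact Nat.Coprime.eq_one_of_dvd
    (Nat.Coprime.pow_left a (Nat.coprime_two_left.mpr ht.natAbs)).symm hdvd

theorem Int.not_pow_sub_one_dvd_two_pow {x : ℤ} {n a : ℕ} (hx : Odd x) (hx1 : 1 < |x|)
    (hn : Odd n) (hn1 : 1 < n) : ¬ x ^ n - 1 ∣ 2 ^ a := by
  intro h
  have hfac := geom_sum_mul x n
  have hcofactor : |∑ i ∈ Finset.range n, x ^ i| = 1 := by
    rw [Int.abs_eq_natAbs, Int.natAbs_eq_one_of_odd_of_dvd_two_pow (Int.odd_geom_sum hx hn)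
      (dvd_trans (Dvd.intro _ hfac) h)]
    rfl
  have hn3 : 3 ≤ n := by obtain ⟨m, rfl⟩ := hn; omega
  have h2x : 2 ≤ |x| := hx1
  have hcube : 4 * |x| ≤ |x| ^ 3 := by nlinarith [mul_le_mul h2x h2x zero_le_two (abs_nonneg x)]
  have hpow : |x| ^ 3 ≤ |x| ^ n := pow_le_pow_right₀ hx1.le hn3
  have : |x| ^ n - 1 ≤ |x| + 1 :=
    calc |x| ^ n - 1 ≤ |x ^ n - 1| := by
          rw [← abs_pow]; simpa using abs_sub_abs_le_abs_sub (x ^ n) 1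
      _ = |x - 1| := by rw [← hfac, abs_mul, hcofactor, one_mul]
      _ ≤ |x| + 1 := by simpa using abs_sub x 1
  linarith

theorem Nat.eq_three_of_sq_eq_two_pow_add_one {y l : ℕ} (h : y ^ 2 = 2 ^ l + 1) : y = 3 := by
  have hfac : (y - 1) * (y + 1) = 2 ^ l := by
    obtain _ | y := y
    · simp at h
    · simp only [add_tsub_cancel_right]; linarith
  have hy : y - 1 ≠ 0 := left_ne_zero_of_mul (hfac ▸ (Nat.two_pow_pos l).ne')
  obtain ⟨a, -, ha⟩ := (Nat.dvd_prime_pow Nat.prime_two).1 (Dvd.intro _ hfac)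
  obtain ⟨b, -, hb⟩ := (Nat.dvd_prime_pow Nat.prime_two).1 (Dvd.intro_left _ hfac)
  rcases a with _ | _ | a <;> rcases b with _ | _ | b <;>
    simp only [pow_succ, pow_zero] at ha hb <;> omega

theorem Nat.sq_add_one_ne_two_pow (s : ℕ) {k : ℕ} (hk : 2 ≤ k) : s ^ 2 + 1 ≠ 2 ^ k := by
  intro h
  have h4 : ((s : ZMod 4)) ^ 2 + 1 = 0 := by
    obtain ⟨j, rfl⟩ := Nat.exists_eq_add_of_le hk
    have h4 := congrArg (Nat.cast : ℕ → ZMod 4) h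
    push_cast [pow_add] at h4
    rwa [show (4 : ZMod 4) = 0 by decide, zero_mul] at h4
  generalize (s : ZMod 4) = t at h4
  revert t
  decide

theorem Nat.two_pow_ne_pow_add_one {r k l : ℕ} (hk : 1 < k) (hl : 1 < l) :
    2 ^ k ≠ r ^ l + 1 := by
  intro h
  rcases Nat.even_or_odd l with ⟨m, rfl⟩ | hlodd
  · exact Nat.sq_add_one_ne_two_pow (r ^ m) hk (by rw [h, ← pow_mul, mul_two])
  have hr : Odd r := by
    have : Even (r ^ l + 1) := h ▸ Nat.even_pow.2 ⟨even_two, by omega⟩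
    exact (Nat.odd_pow_iff (by omega)).1 (Nat.even_add_one.1 this |> Nat.not_even_iff_odd.1)
  have hr1 : 1 < r := by
    refine lt_of_le_of_ne hr.pos (Ne.symm ?_)
    rintro rfl
    rw [one_pow, ← pow_one 2] at h
    exact absurd (Nat.pow_right_injective le_rfl h) (by omega : k ≠ 1)
  apply Int.not_pow_sub_one_dvd_two_pow (x := -r) (a := k) (by simpa using hr) (by simpa using hr1)
    hlodd hl
  have hz : (2 : ℤ) ^ k = r ^ l + 1 := by exact_mod_cast h
  exact ⟨-1, by rw [hlodd.neg_pow, hz]; ring⟩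

theorem Nat.pow_eq_nine_of_pow_eq_two_pow_add_one {p k l : ℕ} (hk : 1 < k)
    (h : p ^ k = 2 ^ l + 1) :
    p ^ k = 9 ∧ 2 ^ l = 8 := by
  rcases Nat.even_or_odd k with ⟨m, rfl⟩ | hkodd
  · have h3 : p ^ m = 3 :=
      Nat.eq_three_of_sq_eq_two_pow_add_one (by rw [← h, ← pow_mul, mul_two])
    rw [← two_mul, pow_mul', h3] at h ⊢
    omega
  obtain rfl | hl := Nat.eq_zero_or_pos l
  · exact absurd (Nat.prime_two.pow_eq_iff.1 h).2 (by omega)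
  have hp : Odd p :=
    (Nat.odd_pow_iff (by omega)).1 (h ▸ (Nat.even_pow.2 ⟨even_two, hl.ne'⟩).add_one)
  have hp1 : 1 < p := by
    refine lt_of_le_of_ne hp.pos (Ne.symm ?_)
    rintro rfl
    simp at h
  have hz : (p : ℤ) ^ k = 2 ^ l + 1 := by exact_mod_cast h
  exact absurd ⟨1, by rw [hz]; ring⟩ (Int.not_pow_sub_one_dvd_two_pow (x := p) (a := l)
    (by exact_mod_cast hp) (by simpa using hp1) hkodd hk)

theorem stmt_0 (p r k l : ℕ) (hp : p.Prime) (hr : r.Prime)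
    (hk : 1 < k) (hl : 1 < l) (h : p ^ k = r ^ l + 1) :
    p ^ k = 9 ∧ r ^ l = 8 := by
  have hparity : Even p ∨ Even r := by
    rcases Nat.even_or_odd (r ^ l) with hrl | hrl
    · exact Or.inr (Nat.even_pow.1 hrl).1
    · exact Or.inl (Nat.even_pow.1 (h ▸ hrl.add_one)).1
  rcases hparity with hp2 | hr2
  · exact absurd (hp.even_iff.1 hp2 ▸ h) (Nat.two_pow_ne_pow_add_one hk hl)
  · rw [hr.even_iff.1 hr2] at h ⊢
    exact Nat.pow_eq_nine_of_pow_eq_two_pow_add_one hk h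
end

section
/- If a finite group G acts transitively on a set Ω of cardinality p^k for a prime p, then every Sylow p-subgroup P of G also acts transitively on Ω. -/
theorem Subgroup.relIndex_eq_index_of_coprime {G : Type*} [Group G] {H K : Subgroup G}
    (hHK : H.index.Coprime K.index) : H.relIndex K = H.index := by
  rcases eq_or_ne H.index 0 with hH | hH
  · rw [hH, Nat.coprime_zero_left, index_eq_one] at hHK
    rw [hHK, relIndex_top_right]
  have hdvd : H.index ∣ H.relIndex K * K.index := by
    rw [← inf_relIndex_right, relIndex_mul_index inf_le_right]
    exact index_dvd_of_le inf_le_left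
  have hrel : H.relIndex K ≠ 0 := fun h => hH (index_eq_zero_of_relIndex_eq_zero h)
  refine le_antisymm ?_ (Nat.le_of_dvd (Nat.pos_of_ne_zero hrel) (hHK.dvd_of_dvd_mul_right hdvd))
  rw [← relIndex_top_right]
  exact relIndex_le_of_le_right le_top (by rwa [relIndex_top_right])

theorem MulAction.stabilizer_subgroup_eq_subgroupOf {G X : Type*} [Group G] [MulAction G X]
    (K : Subgroup G) (x : X) : stabilizer K x = (stabilizer G x).subgroupOf K :=
  rfl

/-- The orbit of `x` under `K` has `[K : K ∩ G_x]` points, which equals `[G : G_x] = |X|`. -/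
theorem MulAction.IsPretransitive.of_coprime_index {G X : Type*} [Group G] [MulAction G X]
    [Finite X] [IsPretransitive G X] {K : Subgroup G} (hK : (Nat.card X).Coprime K.index) :
    IsPretransitive K X := by
  rcases isEmpty_or_nonempty X with _ | ⟨⟨x⟩⟩
  · exact ⟨fun x => isEmptyElim x⟩
  rw [← index_stabilizer_of_transitive G x] at hK
  rw [isPretransitive_iff_orbit_eq_univ x, Set.eq_univ_iff_ncard, ← index_stabilizer,
    ← index_stabilizer_of_transitive G x, stabilizer_subgroup_eq_subgroupOf]
  exact Subgroup.relIndex_eq_index_of_coprime hK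

theorem stmt_1 {G : Type*} [Group G] [Finite G] {Ω : Type*} [Fintype Ω]
    [MulAction G Ω] [MulAction.IsPretransitive G Ω]
    (p k : ℕ) (hp : p.Prime) (hΩ : Fintype.card Ω = p ^ k)
    (P : Sylow p G) :
    MulAction.IsPretransitive P Ω := by
  have : Fact p.Prime := ⟨hp⟩
  refine MulAction.IsPretransitive.of_coprime_index ?_
  rw [Nat.card_eq_fintype_card, hΩ]
  exact Nat.Coprime.pow_left k ((Nat.Prime.coprime_iff_not_dvd hp).2 P.not_dvd_index)
end

section
/- Suppose q ≥ 2, d ≥ 2 are integers and (q^d - 1)/(q - 1) = p^k for a prime p and integer k ≥ 1. Then d is prime. -/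
/-!
Suppose `d = a * b` with `a, b ≥ 2`. Splitting the geometric sum as
`(∑_{i<a} q^i) * (∑_{j<b} (q^a)^j)` writes `p^k` as a product of two factors `> 1`, so `p`
divides both. From the first, `q^a ≡ 1 (mod p)`; then the second is `≡ b (mod p)`, so `p ∣ b`.
Hence if `d` were composite, every prime factor of `d` would be `p`, and `p ∣ d / p`.
Taking `a = d / p` and `b = p`, the second factor is a power of `p` exceeding `p`, yet it is
`≡ p (mod p^2)`: for odd `p` this is the lifting-the-exponent congruence, and for `p = 2`
it is `1 + y^2` with `y = q^(a/2)`, which is never divisible by `4`.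
-/

open Finset

lemma geom_sum_mul_geom_sum_pow (q a b : ℕ) :
    (∑ i ∈ range a, q ^ i) * ∑ j ∈ range b, (q ^ a) ^ j = ∑ i ∈ range (a * b), q ^ i := by
  induction b with
  | zero => simp
  | succ b ih =>
    rw [sum_range_succ, mul_add, ih, Nat.mul_succ, sum_range_add, sum_mul]
    congr 1
    refine sum_congr rfl fun i _ => ?_
    rw [← pow_mul, ← pow_add, Nat.add_comm]

lemma one_add_le_geom_sum (q : ℕ) {a : ℕ} (ha : 2 ≤ a) : 1 + q ≤ ∑ i ∈ range a, q ^ i :=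
  calc 1 + q = ∑ i ∈ range 2, q ^ i := by simp [sum_range_succ]
    _ ≤ ∑ i ∈ range a, q ^ i := sum_le_sum_of_subset (range_subset_range.mpr ha)

lemma Nat.Prime.dvd_of_one_lt_of_dvd_pow {p m k : ℕ} (hp : p.Prime) (hm : 1 < m)
    (hmk : m ∣ p ^ k) : p ∣ m := by
  obtain ⟨i, -, rfl⟩ := (Nat.dvd_prime_pow hp).1 hmk
  exact dvd_pow_self p (by rintro rfl; simp at hm)

lemma pow_modEq_one_of_dvd_geom_sum {n q a : ℕ} (h : n ∣ ∑ i ∈ range a, q ^ i) :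
    q ^ a ≡ 1 [MOD n] := by
  rw [← ZMod.natCast_eq_zero_iff] at h
  rw [← ZMod.natCast_eq_natCast_iff]
  push_cast at h ⊢
  have := geom_sum_mul (q : ZMod n) a
  rw [h, zero_mul] at this
  exact sub_eq_zero.mp this.symm

lemma geom_sum_modEq_of_modEq_one {n x : ℕ} (hx : x ≡ 1 [MOD n]) (b : ℕ) :
    ∑ j ∈ range b, x ^ j ≡ b [MOD n] := by
  rw [← ZMod.natCast_eq_natCast_iff] at hx ⊢
  push_cast
  simp [hx]

section Factorization

variable {q p k a b : ℕ}

lemma pow_modEq_one_of_geom_sum_eq_prime_pow (hq : 1 ≤ q) (hp : p.Prime) (ha : 2 ≤ a)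
    (h : ∑ i ∈ range (a * b), q ^ i = p ^ k) : q ^ a ≡ 1 [MOD p] := by
  have hS : 1 < ∑ i ∈ range a, q ^ i := by
    have := one_add_le_geom_sum q ha
    omega
  exact pow_modEq_one_of_dvd_geom_sum <|
    hp.dvd_of_one_lt_of_dvd_pow hS (Dvd.intro _ ((geom_sum_mul_geom_sum_pow q a b).trans h))

lemma prime_dvd_of_geom_sum_eq_prime_pow (hq : 1 ≤ q) (hp : p.Prime) (ha : 2 ≤ a) (hb : 2 ≤ b)
    (h : ∑ i ∈ range (a * b), q ^ i = p ^ k) : p ∣ b := by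
  have hT : p ∣ ∑ j ∈ range b, (q ^ a) ^ j := by
    refine hp.dvd_of_one_lt_of_dvd_pow ?_
      (Dvd.intro_left _ ((geom_sum_mul_geom_sum_pow q a b).trans h))
    have := one_add_le_geom_sum (q ^ a) hb
    have := Nat.one_le_pow a q hq
    omega
  have hmod := geom_sum_modEq_of_modEq_one (pow_modEq_one_of_geom_sum_eq_prime_pow hq hp ha h) b
  exact (hmod.dvd_iff dvd_rfl).1 hT

end Factorization

lemma not_four_dvd_one_add_sq (y : ℕ) : ¬ 4 ∣ 1 + y ^ 2 := by
  rw [← ZMod.natCast_eq_zero_iff]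
  push_cast
  generalize (y : ZMod 4) = z
  revert z
  decide

lemma not_sq_dvd_geom_sum_of_modEq_one {p x : ℕ} (hp : p.Prime) (hodd : Odd p)
    (hx : x ≡ 1 [MOD p]) : ¬ p ^ 2 ∣ ∑ i ∈ range p, x ^ i := by
  obtain ⟨t, ht⟩ := Nat.modEq_iff_dvd.1 hx.symm
  have hxt : 1 + (p : ℤ) * t = x := by rw [← ht]; ring
  have hsq := odd_sq_dvd_geom_sum₂_sub (R := ℤ) 1 t hodd
  simp only [one_pow, mul_one, hxt] at hsq
  intro h
  have : p ^ 2 ∣ p ^ 1 := by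
    have := dvd_sub (Int.natCast_dvd_natCast.2 h) hsq
    push_cast at this
    rw [pow_one, ← Int.natCast_dvd_natCast]
    simpa using this
  exact absurd ((Nat.pow_dvd_pow_iff_le_right hp.one_lt).1 this) (by norm_num)

lemma not_sq_dvd_geom_sum_pow {p q a : ℕ} (hp : p.Prime) (hpa : p ∣ a) (hx : q ^ a ≡ 1 [MOD p]) :
    ¬ p ^ 2 ∣ ∑ j ∈ range p, (q ^ a) ^ j := by
  rcases hp.eq_two_or_odd' with rfl | hodd
  · obtain ⟨c, rfl⟩ := hpa
    rw [pow_mul']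
    simpa [sum_range_succ] using not_four_dvd_one_add_sq (q ^ c)
  · exact not_sq_dvd_geom_sum_of_modEq_one hp hodd hx

lemma geom_sum_ne_prime_pow_of_dvd {q p k a : ℕ} (hq : 2 ≤ q) (hp : p.Prime) (ha : 0 < a)
    (hpa : p ∣ a) : ∑ i ∈ range (a * p), q ^ i ≠ p ^ k := by
  intro h
  have hpa_le : p ≤ a := Nat.le_of_dvd ha hpa
  have hx := pow_modEq_one_of_geom_sum_eq_prime_pow (by omega) hp (hpa_le.trans' hp.two_le) h
  obtain ⟨s, -, hs⟩ := (Nat.dvd_prime_pow hp).1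
    (Dvd.intro_left _ ((geom_sum_mul_geom_sum_pow q a p).trans h))
  have hpT : p < ∑ j ∈ range p, (q ^ a) ^ j := by
    have := one_add_le_geom_sum (q ^ a) hp.two_le
    have := Nat.pow_le_pow_left hq a
    have := @Nat.lt_two_pow_self a
    omega
  have hs2 : 1 < s := (Nat.pow_lt_pow_iff_right hp.one_lt).1 (by rwa [pow_one, ← hs])
  exact not_sq_dvd_geom_sum_pow hp hpa hx (hs ▸ pow_dvd_pow p hs2)

theorem stmt_7_general (q d p k : ℕ) (hq : 2 ≤ q) (hd : 2 ≤ d) (hp : p.Prime)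
    (h : ∑ i ∈ Finset.range d, q ^ i = p ^ k) :
    d.Prime := by
  by_contra hdp
  have two_le_cofactor : ∀ {r m : ℕ}, d = r * m → r.Prime → 2 ≤ m := by
    rintro r (_ | _ | m) hdm hr
    · omega
    · exact absurd (by simpa [hdm] using hr) hdp
    · omega
  have prime_factor_eq : ∀ r, r.Prime → r ∣ d → r = p := by
    rintro r hr ⟨m, hdm⟩
    rw [hdm, mul_comm] at h
    exact ((Nat.prime_dvd_prime_iff_eq hp hr).1 <|
      prime_dvd_of_geom_sum_eq_prime_pow (by omega) hp (two_le_cofactor hdm hr) hr.two_le h).symm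
  obtain ⟨a, hda⟩ : p ∣ d :=
    prime_factor_eq _ (Nat.minFac_prime (by omega)) (Nat.minFac_dvd d) ▸ Nat.minFac_dvd d
  have ha : 2 ≤ a := two_le_cofactor hda hp
  have hpa : p ∣ a := prime_factor_eq _ (Nat.minFac_prime (by omega))
    (hda ▸ dvd_mul_of_dvd_right (Nat.minFac_dvd a) p) ▸ Nat.minFac_dvd a
  exact geom_sum_ne_prime_pow_of_dvd hq hp (by omega) hpa (by rwa [hda, mul_comm] at h)

theorem stmt_7 (q d p k : ℕ) (hq : 2 ≤ q) (hd : 2 ≤ d) (hp : p.Prime)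
    (hk : 1 ≤ k) (h : ∑ i ∈ Finset.range d, q ^ i = p ^ k) :
    d.Prime :=
  stmt_7_general q d p k hq hd hp h
end

section
/- Suppose q ≥ 2 and d > 2 are integers and (q^d - 1)/(q - 1) = p^k for a prime p and integer k ≥ 1. Then d divides p - 1. -/
/-!
If `p` is odd, let `e` be the order of `q` modulo `p` and write `d = e * n`. The factor
`∑ j < n, (q ^ e) ^ j` of the sum is again a power of `p`, and since `p ∣ q ^ e - 1`, lifting the
exponent gives it the `p`-adic valuation of `n`; so it is at most `n`, which forces `n = 1`.
Hence `d` is the multiplicative order of `q` modulo `p` and divides `p - 1`.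
If `p = 2`, then `q` is odd and `d` even, and the `2`-adic lifting the exponent lemma gives
`2 ^ (k + 1) ∣ (q + 1) * d`, too small for `2 * ∑ i < d, q ^ i = 2 ^ (k + 1)` once `d ≥ 3`.
-/

open Finset

lemma geom_sum_range_mul {R : Type*} [CommSemiring R] (x : R) (m n : ℕ) :
    ∑ i ∈ range (m * n), x ^ i = (∑ i ∈ range m, x ^ i) * ∑ j ∈ range n, (x ^ m) ^ j := by
  induction n with
  | zero => simp
  | succ n ih =>
    rw [Nat.mul_succ, sum_range_add, ih, sum_range_succ, mul_add, ← pow_mul]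
    congr 1
    rw [sum_mul]
    exact sum_congr rfl fun i _ => by rw [pow_add, mul_comm]

lemma lt_geom_sum {x n : ℕ} (hx : 1 < x) (hn : 1 < n) : n < ∑ i ∈ range n, x ^ i := by
  calc n = ∑ _i ∈ range n, 1 := by simp
    _ < ∑ i ∈ range n, x ^ i :=
      sum_lt_sum (fun i _ => Nat.one_le_pow _ _ (by omega)) ⟨1, mem_range.mpr hn, by simpa⟩

lemma add_one_mul_lt_two_mul_geom_sum {x n : ℕ} (hx : 2 ≤ x) (hn : 3 ≤ n) :
    (x + 1) * n < 2 * ∑ i ∈ range n, x ^ i := by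
  induction n, hn using Nat.le_induction with
  | base => simp only [sum_range_succ, sum_range_zero]; nlinarith
  | succ n hn ih =>
    have : x ≤ x ^ n := Nat.le_self_pow (by omega) x
    rw [sum_range_succ]
    nlinarith

lemma pow_eq_one_of_geom_sum_eq_zero {R : Type*} [Ring R] {x : R} {n : ℕ}
    (h : ∑ i ∈ range n, x ^ i = 0) : x ^ n = 1 := by
  rw [← sub_eq_zero, ← geom_sum_mul, h, zero_mul]

lemma natCast_geom_sum_eq_zero {p q n k : ℕ} (h : ∑ i ∈ range n, q ^ i = p ^ k) (hk : k ≠ 0) :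
    ∑ i ∈ range n, (q : ZMod p) ^ i = 0 := by
  exact_mod_cast (congrArg (Nat.cast : ℕ → ZMod p) h).trans (by simp [hk])

lemma padicValNat_geom_sum {p x n : ℕ} [Fact p.Prime] (hp : Odd p) (hx : 1 < x)
    (hpx : p ∣ x - 1) (hn : n ≠ 0) :
    padicValNat p (∑ i ∈ range n, x ^ i) = padicValNat p n := by
  have hpx' : ¬ p ∣ x := fun h =>
    (Fact.out : p.Prime).not_dvd_one (by simpa [Nat.sub_sub_self hx.le] using Nat.dvd_sub h hpx)
  have := padicValNat.pow_sub_pow hp hx (by simpa using hpx) hpx' hn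
  rw [one_pow, ← geom_sum_mul_of_one_le hx.le, padicValNat.mul (by positivity) (by omega)] at this
  omega

lemma padicValNat_two_geom_sum {x n : ℕ} (hx : 1 < x) (hx2 : Odd x) (hn : n ≠ 0) (hn2 : Even n) :
    padicValNat 2 (∑ i ∈ range n, x ^ i) + 1 = padicValNat 2 (x + 1) + padicValNat 2 n := by
  have := padicValNat.pow_two_sub_one hx hx2.not_two_dvd_nat hn hn2
  rw [← geom_sum_mul_of_one_le hx.le, padicValNat.mul (by positivity) (by omega)] at this
  omega

lemma geom_sum_ne_prime_pow {p x n b : ℕ} [Fact p.Prime] (hp : Odd p) (hx : 1 < x)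
    (hpx : p ∣ x - 1) (hn : 1 < n) : ∑ i ∈ range n, x ^ i ≠ p ^ b := by
  intro h
  have hb : b = padicValNat p n := by
    rw [← padicValNat_geom_sum hp hx hpx (by omega), h, padicValNat.prime_pow]
  have : p ^ b ≤ n := Nat.le_of_dvd (by omega) (hb ▸ pow_padicValNat_dvd)
  exact (lt_geom_sum hx hn).not_ge (h ▸ this)

lemma geom_sum_ne_two_pow {x n k : ℕ} (hx : 2 ≤ x) (hx2 : Odd x) (hn : 3 ≤ n) (hn2 : Even n) :
    ∑ i ∈ range n, x ^ i ≠ 2 ^ k := by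
  intro h
  have hk := padicValNat_two_geom_sum (by omega) hx2 (by omega) hn2
  rw [h, padicValNat.prime_pow] at hk
  have : 2 ^ (k + 1) ≤ (x + 1) * n := by
    rw [hk, pow_add]
    exact Nat.le_of_dvd (by positivity) (mul_dvd_mul pow_padicValNat_dvd pow_padicValNat_dvd)
  have := add_one_mul_lt_two_mul_geom_sum hx hn
  rw [h] at this
  omega

lemma orderOf_natCast_eq_of_geom_sum_eq_prime_pow {p q d k : ℕ} [Fact p.Prime] (hp : Odd p)
    (hq : 2 ≤ q) (hk : k ≠ 0) (h : ∑ i ∈ range d, q ^ i = p ^ k) :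
    orderOf (q : ZMod p) = d := by
  have hqd : (q : ZMod p) ^ d = 1 := pow_eq_one_of_geom_sum_eq_zero (natCast_geom_sum_eq_zero h hk)
  obtain ⟨n, hn⟩ := orderOf_dvd_of_pow_eq_one hqd
  set e := orderOf (q : ZMod p)
  have hd : d ≠ 0 := by rintro rfl; exact absurd h.symm (pow_ne_zero k (Fact.out : p.Prime).ne_zero)
  suffices n = 1 by rw [hn, this, mul_one]
  by_contra hn1
  have hqe : p ∣ q ^ e - 1 := by
    rw [← ZMod.natCast_eq_zero_iff, Nat.cast_sub (Nat.one_le_pow _ _ (by omega)), Nat.cast_pow,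
      pow_orderOf_eq_one, Nat.cast_one, sub_self]
  have hT : ∑ j ∈ range n, (q ^ e) ^ j ∣ p ^ k :=
    Dvd.intro_left _ (h ▸ hn ▸ (geom_sum_range_mul q e n).symm)
  obtain ⟨b, -, hb⟩ := (Nat.dvd_prime_pow Fact.out).mp hT
  obtain ⟨he, hn0⟩ := mul_ne_zero_iff.mp (hn ▸ hd)
  exact geom_sum_ne_prime_pow hp (Nat.one_lt_pow he (by omega)) hqe (by omega) hb

theorem stmt_8 (q d p k : ℕ) (hq : 2 ≤ q) (hd : 2 < d) (hp : p.Prime)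
    (hk : 1 ≤ k) (h : ∑ i ∈ Finset.range d, q ^ i = p ^ k) :
    d ∣ p - 1 := by
  have := Fact.mk hp
  have hS := natCast_geom_sum_eq_zero h (by omega)
  have hq0 : (q : ZMod p) ≠ 0 :=
    ne_zero_pow (by omega : d ≠ 0) (by rw [pow_eq_one_of_geom_sum_eq_zero hS]; exact one_ne_zero)
  obtain rfl | hp2 := eq_or_ne p 2
  · have hq2 : Odd q := ZMod.natCast_ne_zero_iff_odd.mp hq0
    have hd2 : Even d := by
      rw [← ZMod.natCast_eq_zero_iff_even, ← hS, ZMod.natCast_eq_one_iff_odd.mpr hq2]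
      simp
    exact absurd h (geom_sum_ne_two_pow hq hq2 hd hd2)
  rw [← orderOf_natCast_eq_of_geom_sum_eq_prime_pow (hp.odd_of_ne_two hp2) hq (by omega) h]
  exact ZMod.orderOf_dvd_card_sub_one hq0
end

section
/- If q + 1 = p^k where q is a prime power, p is prime, and k ≥ 1, then either p = 2 and q is prime (a Mersenne prime), or k = 1 (so p = q + 1 is prime), or q = 8 and p^k = 9. -/
/-!
Parity forces one of `r`, `p` to be `2`. The engine is the factorisation
`b ^ n - 1 = (b - 1)(1 + b + ⋯ + b ^ (n - 1))`: for odd `b` and odd `n` the second factor is odd,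
so if `b ^ n - 1` is `± 2 ^ k` that factor is `±1`, which forces `n = 1`. Applied to `b = -r` it
shows `r ^ l + 1 = 2 ^ k` with `l` odd only for `l = 1`, and applied to `b = p` it shows
`p ^ k = 2 ^ l + 1` with `k` odd only for `k = 1`. For even `l`, `r ^ l + 1 ≡ 2 [MOD 4]`; for even
`k = 2m`, `(p ^ m - 1)(p ^ m + 1) = 2 ^ l` exhibits two powers of two differing by `2`, so
`p ^ m = 3`.
-/

theorem Int.even_geom_sum_iff {b : ℤ} (hb : Odd b) (n : ℕ) :
    Even (∑ i ∈ Finset.range n, b ^ i) ↔ Even n := by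
  induction n with
  | zero => simp
  | succ n ih =>
    simp [Finset.sum_range_succ, Int.even_add, ih, parity_simps, Int.not_even_iff_odd.2 hb.pow]

theorem Int.natAbs_pow_sub_one_eq_of_dvd_two_pow {b : ℤ} {n k : ℕ} (hb : Odd b) (hn : Odd n)
    (h : b ^ n - 1 ∣ 2 ^ k) : (b ^ n - 1).natAbs = (b - 1).natAbs := by
  set S := ∑ i ∈ Finset.range n, b ^ i
  have hgeom : S * (b - 1) = b ^ n - 1 := geom_sum_mul b n
  have hS_odd : Odd S.natAbs :=
    Int.natAbs_odd.2 (Int.not_even_iff_odd.1 fun he ↦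
      Nat.not_even_iff_odd.2 hn ((Int.even_geom_sum_iff hb n).1 he))
  have hS_dvd : S.natAbs ∣ 2 ^ k :=
    Int.natCast_dvd_natCast.1 (by simpa using dvd_of_mul_right_dvd (hgeom ▸ h))
  have hS_one : S.natAbs = 1 := (hS_odd.coprime_two_right.pow_right k).eq_one_of_dvd hS_dvd
  rw [← hgeom, Int.natAbs_mul, hS_one, one_mul]

theorem Nat.eq_one_of_pow_add_one_eq_two_pow {a n k : ℕ} (ha : Odd a) (ha₁ : 1 < a) (hn : Odd n)
    (h : a ^ n + 1 = 2 ^ k) : n = 1 := by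
  have hcast : (a : ℤ) ^ n + 1 = 2 ^ k := by exact_mod_cast h
  have hz : (-(a : ℤ)) ^ n - 1 = -2 ^ k := by
    rw [hn.neg_pow]; linear_combination -hcast
  have habs := Int.natAbs_pow_sub_one_eq_of_dvd_two_pow ha.natCast.neg hn (k := k)
    (by rw [hz]; exact neg_dvd.2 dvd_rfl)
  rw [hz] at habs
  simp only [Int.natAbs_neg, Int.natAbs_pow, Int.reduceAbs] at habs
  exact (Nat.pow_eq_self_iff ha₁).1 (by omega)

theorem Nat.eq_one_of_pow_eq_two_pow_add_one {a n k : ℕ} (ha : Odd a) (ha₁ : 1 < a) (hn : Odd n)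
    (h : a ^ n = 2 ^ k + 1) : n = 1 := by
  have hz : (a : ℤ) ^ n - 1 = 2 ^ k := by
    rw [sub_eq_iff_eq_add]; exact_mod_cast h
  have habs := Int.natAbs_pow_sub_one_eq_of_dvd_two_pow ha.natCast hn (k := k)
    (by rw [hz])
  rw [hz] at habs
  simp only [Int.natAbs_pow, Int.reduceAbs] at habs
  exact (Nat.pow_eq_self_iff ha₁).1 (by omega)

theorem Nat.eq_one_of_sq_add_one_eq_two_pow {x k : ℕ} (hx : Odd x) (h : x ^ 2 + 1 = 2 ^ k) :
    k = 1 := by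
  have hx4 : x ^ 2 % 4 = 1 := by
    exact_mod_cast Int.sq_mod_four_eq_one_of_odd (x := x) (by exact_mod_cast hx)
  match k, h with
  | 0, h => simp [hx.pos.ne'] at h
  | 1, _ => rfl
  | k + 2, h => rw [pow_add] at h; omega

theorem Nat.eq_three_of_sq_eq_two_pow_add_one_s10 {x l : ℕ} (hx : Odd x) (h : x ^ 2 = 2 ^ l + 1) :
    x = 3 := by
  have hfac : (x - 1) * (x + 1) = 2 ^ l := by
    rw [mul_comm, ← Nat.mul_self_sub_mul_self_eq, ← sq, h, one_mul, Nat.add_sub_cancel]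
  obtain ⟨i, -, hi⟩ := (Nat.dvd_prime_pow Nat.prime_two).1 (Dvd.intro _ hfac)
  obtain ⟨j, -, hj⟩ := (Nat.dvd_prime_pow Nat.prime_two).1 (Dvd.intro_left _ hfac)
  have hi_pos := Nat.two_pow_pos i
  have hij : i ≤ j := (Nat.pow_le_pow_iff_right one_lt_two).1 (by omega)
  have hdvd : 2 ^ i ∣ 2 ^ i + 2 := by
    rw [show 2 ^ i + 2 = 2 ^ j by omega]; exact Nat.pow_dvd_pow 2 hij
  have := Nat.le_of_dvd two_pos ((Nat.dvd_add_right dvd_rfl).1 hdvd)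
  obtain ⟨c, rfl⟩ := hx
  omega

theorem stmt_10 (q r l p k : ℕ) (hr : r.Prime) (hl : 1 ≤ l) (hqrl : q = r ^ l)
    (hp : p.Prime) (hk : 1 ≤ k) (h : q + 1 = p ^ k) :
    (p = 2 ∧ q.Prime) ∨ k = 1 ∨ (q = 8 ∧ p ^ k = 9) := by
  subst hqrl
  rcases hr.eq_two_or_odd' with rfl | hr_odd
  · have hp_odd : Odd p :=
      (Nat.odd_pow_iff (by omega)).1 (h ▸ (Nat.even_pow.2 ⟨even_two, by omega⟩).add_one)
    rcases Nat.even_or_odd k with ⟨m, rfl⟩ | hk_odd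
    · have h3 : p ^ m = 3 :=
        Nat.eq_three_of_sq_eq_two_pow_add_one_s10 hp_odd.pow (by rw [← pow_mul, mul_two, ← h])
      obtain ⟨rfl, rfl⟩ := Nat.prime_three.pow_eq_iff.1 h3
      exact Or.inr (Or.inr ⟨by omega, rfl⟩)
    · exact Or.inr (Or.inl (Nat.eq_one_of_pow_eq_two_pow_add_one hp_odd hp.one_lt hk_odd h.symm))
  · obtain rfl : p = 2 := hp.even_iff.1 ((Nat.even_pow' (by omega)).1 (h ▸ hr_odd.pow.add_one))
    rcases Nat.even_or_odd l with ⟨m, rfl⟩ | hl_odd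
    · exact Or.inr (Or.inl
        (Nat.eq_one_of_sq_add_one_eq_two_pow hr_odd.pow (by rwa [← pow_mul, mul_two])))
    · rw [Nat.eq_one_of_pow_add_one_eq_two_pow hr_odd hr.one_lt hl_odd h, pow_one]
      exact Or.inl ⟨rfl, hr⟩
end

section
/- Let G be a finite group acting transitively and imprimitively on a set of cardinality p^2 for a prime p, or primitively on a set of cardinality p or p^2 where G is a p-group. Then if G is a p-group acting transitively and faithfully on a set of cardinality p^2, G contains a subgroup acting regularly. -/
/-!
Let `H` be a point stabilizer, of index `p²`, and `z` a central element of order `p`. Since the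
action is faithful and transitive, `⟨z⟩ ∩ H = 1`, so `N = ⟨z⟩H` has index `p` and is normal.
For any `g ∉ N`, the abelian group `R = ⟨z, g⟩` satisfies `RH = RN = G`, i.e. it is transitive,
and an abelian transitive faithful group acts regularly.
-/

open MulAction Subgroup
open scoped Pointwise

namespace Subgroup

variable {G : Type*} [Group G]

theorem normal_of_le_center {Z : Subgroup G} (hZ : Z ≤ center G) : Z.Normal :=
  ⟨fun n hn g => by rwa [mem_center_iff.mp (hZ hn) g, mul_inv_cancel_right]⟩

theorem isMulCommutative_closure_pair {z : G} (hz : z ∈ center G) (g : G) :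
    IsMulCommutative (closure {z, g}) :=
  isMulCommutative_closure <| by
    simp only [Set.mem_insert_iff, Set.mem_singleton_iff]
    rintro a (rfl | rfl) b (rfl | rfl)
    all_goals first | rfl | exact mem_center_iff.mp hz _ | exact (mem_center_iff.mp hz _).symm

theorem index_sup_mul_card_of_inf_eq_bot [Finite G] {Z H : Subgroup G} [Z.Normal]
    (hZH : Z ⊓ H = ⊥) : (Z ⊔ H).index * Nat.card Z = H.index := by
  have hrel : Z.relIndex (Z ⊔ H) = Nat.card H := by
    rw [relIndex_sup_left, ← inf_relIndex_right, hZH, relIndex_bot_left]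
  have h := relIndex_mul_index (le_sup_left : Z ≤ Z ⊔ H)
  rw [hrel] at h
  have hZ := index_mul_card Z
  have hH := index_mul_card H
  have : 0 < Nat.card H := Nat.card_pos
  nlinarith

theorem sup_eq_top_of_index_prime {N K : Subgroup G} (hN : N.index.Prime) (hK : ¬K ≤ N) :
    K ⊔ N = ⊤ := by
  rw [← relIndex_mul_index (le_sup_right : N ≤ K ⊔ N)] at hN
  rcases Nat.prime_mul_iff.mp hN with ⟨-, h⟩ | ⟨-, h⟩
  · exact index_eq_one.mp h
  · exact absurd (le_sup_left.trans (relIndex_eq_one.mp h)) hK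

end Subgroup

namespace IsPGroup

variable {G : Type*} [Group G] [Finite G] {p : ℕ} [Fact p.Prime]

theorem exists_mem_center_orderOf_eq (hG : IsPGroup p G) (hp : p ∣ Nat.card G) :
    ∃ z ∈ center G, orderOf z = p := by
  have : Nontrivial G := Finite.one_lt_card_iff_nontrivial.mp <|
    (Fact.out : p.Prime).one_lt.trans_le (Nat.le_of_dvd Nat.card_pos hp)
  have := hG.center_nontrivial
  have hdvd := ((hG.to_subgroup (center G)).card_eq_or_dvd).resolve_left
    Finite.one_lt_card.ne'
  obtain ⟨z, hz⟩ := exists_prime_orderOf_dvd_card' p hdvd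
  exact ⟨z, z.2, by rwa [orderOf_coe]⟩

theorem normal_of_index_eq {N : Subgroup G} (hG : IsPGroup p G) (hN : N.index = p) :
    N.Normal := by
  obtain ⟨n, hn⟩ := IsPGroup.iff_card.mp hG
  have hn0 : n ≠ 0 := by
    rintro rfl
    exact (Fact.out : p.Prime).not_dvd_one (by simpa [hN, hn] using N.index_dvd_card)
  exact normal_of_index_eq_minFac_card (by rw [hn, (Fact.out : p.Prime).pow_minFac hn0, hN])

end IsPGroup

namespace MulAction

variable {G Ω : Type*} [Group G] [MulAction G Ω]

theorem center_inf_stabilizer_eq_bot [FaithfulSMul G Ω] [IsPretransitive G Ω] (x : Ω) :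
    center G ⊓ stabilizer G x = ⊥ := by
  refine eq_bot_iff.mpr fun u ⟨hu, hux⟩ => mem_bot.mpr <| eq_of_smul_eq_smul (α := Ω) fun y => ?_
  obtain ⟨h, rfl⟩ := exists_smul_eq G x y
  rw [one_smul, smul_smul, ← mem_center_iff.mp hu h, mul_smul, mem_stabilizer_iff.mp hux]

theorem stabilizer_eq_bot_of_isMulCommutative [IsMulCommutative G] [FaithfulSMul G Ω]
    [IsPretransitive G Ω] (x : Ω) : stabilizer G x = ⊥ := by
  simpa [center_eq_top] using center_inf_stabilizer_eq_bot (G := G) x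

theorem index_zpowers_sup_stabilizer_mul_orderOf [Finite G] [FaithfulSMul G Ω]
    [IsPretransitive G Ω] {z : G} (hz : z ∈ center G) (x : Ω) :
    (zpowers z ⊔ stabilizer G x).index * orderOf z = Nat.card Ω := by
  have := normal_of_le_center (zpowers_le.mpr hz)
  rw [← Nat.card_zpowers, ← index_stabilizer_of_transitive G x]
  exact index_sup_mul_card_of_inf_eq_bot <| eq_bot_iff.mpr <|
    (inf_le_inf_right _ (zpowers_le.mpr hz)).trans (center_inf_stabilizer_eq_bot x).le

theorem isPretransitive_of_mul_stabilizer_eq_univ [IsPretransitive G Ω] {R : Subgroup G}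
    {x : Ω} (hR : (R : Set G) * (stabilizer G x : Set G) = Set.univ) : IsPretransitive R Ω := by
  refine IsPretransitive.of_orbit (x₀ := x) fun y => ?_
  obtain ⟨h, rfl⟩ := exists_smul_eq G x y
  obtain ⟨r, hr, a, ha, rfl⟩ := hR.symm ▸ Set.mem_univ h
  exact ⟨⟨r, hr⟩, by rw [mul_smul, mem_stabilizer_iff.mp ha]; rfl⟩

theorem isPretransitive_closure_pair [IsPretransitive G Ω] {z g : G} {x : Ω}
    (hz : z ∈ center G) [(zpowers z ⊔ stabilizer G x).Normal]
    (hN : (zpowers z ⊔ stabilizer G x).index.Prime) (hg : g ∉ zpowers z ⊔ stabilizer G x) :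
    IsPretransitive (closure {z, g}) Ω := by
  have := normal_of_le_center (zpowers_le.mpr hz)
  have hzR : zpowers z ≤ closure {z, g} := zpowers_le.mpr (subset_closure (by simp))
  have hRN : closure {z, g} ⊔ (zpowers z ⊔ stabilizer G x) = ⊤ :=
    sup_eq_top_of_index_prime hN fun h => hg (h (subset_closure (by simp)))
  refine isPretransitive_of_mul_stabilizer_eq_univ (x := x) (Set.eq_univ_of_univ_subset ?_)
  rw [← coe_top, ← hRN, mul_normal, normal_mul, ← mul_assoc]
  exact Set.mul_subset_mul_right <| Set.mul_subset_iff.mpr fun a ha b hb => mul_mem ha (hzR hb)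

end MulAction

theorem stmt_19 {G : Type*} [Group G] [Finite G] (p : ℕ) (hp : p.Prime)
    (hG : IsPGroup p G) {Ω : Type*} [Fintype Ω] [MulAction G Ω]
    [FaithfulSMul G Ω] [MulAction.IsPretransitive G Ω]
    (hΩ : Fintype.card Ω = p ^ 2) :
    ∃ R : Subgroup G, MulAction.IsPretransitive R Ω ∧
      ∀ x : Ω, MulAction.stabilizer R x = ⊥ := by
  have : Fact p.Prime := ⟨hp⟩
  obtain ⟨x⟩ : Nonempty Ω := Fintype.card_pos_iff.mp (hΩ ▸ pow_pos hp.pos 2)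
  have hcard : Nat.card Ω = p ^ 2 := by rw [Nat.card_eq_fintype_card, hΩ]
  have hpG : p ∣ Nat.card G := by
    rw [← card_mul_index (stabilizer G x), index_stabilizer_of_transitive, hcard]
    exact (dvd_pow_self p two_ne_zero).mul_left _
  obtain ⟨z, hzc, hz⟩ := hG.exists_mem_center_orderOf_eq hpG
  set N := zpowers z ⊔ stabilizer G x
  have hN : N.index = p := by
    have h := index_zpowers_sup_stabilizer_mul_orderOf hzc x
    rw [hz, hcard, sq] at h
    exact Nat.eq_of_mul_eq_mul_right hp.pos h
  have := hG.normal_of_index_eq hN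
  obtain ⟨g, hg⟩ : ∃ g, g ∉ N := by
    by_contra! h
    rw [(eq_top_iff' N).mpr h, index_top] at hN
    exact hp.one_lt.ne hN
  have := isMulCommutative_closure_pair hzc g
  have := isPretransitive_closure_pair hzc (hN ▸ hp) hg
  exact ⟨closure {z, g}, this, stabilizer_eq_bot_of_isMulCommutative⟩
end
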